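/- For positive integers n and d, and q a complex number such that [m] ≠ 0 for all m ≥ 1: ∑_{k=1}^n (-1)^{k+1} q^{C(k,2)} qbinom(n,k) ∑_{k ≥ k_1 ≥ ... ≥ k_d ≥ 1} 1/([k_1]···[k_d]) = 1/[n]^d. -/

import Mathlib

noncomputable def qint (q : ℂ) (m : ℕ) : ℂ := ∑ i ∈ Finset.range m, q ^ i

noncomputable def qfact (q : ℂ) : ℕ → ℂ
  | 0 => 1
  | n + 1 => qint q (n + 1) * qfact q n

noncomputable def qbinom (q : ℂ) (n k : ℕ) : ℂ :=
  if k ≤ n then qfact q n / (qfact q k * qfact q (n - k)) else 0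

/-- Weakly decreasing chains `hi ≥ f 0 ≥ f 1 ≥ ⋯ ≥ f (d-1) ≥ lo`. -/
def chainsIcc (d lo hi : ℕ) : Finset (Fin d → ℕ) :=
  (Fintype.piFinset fun _ : Fin d => Finset.Icc lo hi).filter
    fun f => ∀ i j : Fin d, i ≤ j → f j ≤ f i

/-- `idx f j` is the paper's `n_j` (1-indexed entry of the chain `f`). -/
def idx {w : ℕ} (f : Fin w → ℕ) (j : ℕ) : ℕ :=
  if h : j - 1 < w then f ⟨j - 1, h⟩ else 0

/-!
Write `c n k = (-1)^(k+1) q^C(k,2) [n choose k]` (`bradleyCoeff`) and `H d k` (`qHarmonicStar`)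
for the inner sum over chains of length `d` bounded by `k`, so that
`H (d+1) k = ∑_{j ≤ k} H d j / [j]`. By q-Pascal the partial sums of `c (n+1) ·` telescope, and
together with the absorption identity `[j] [n+1 choose j] = [n+1] [n choose j-1]` this gives
`(∑_{k ≥ j} c (n+1) k) / [j] = c (n+1) j / [n+1]`. Exchanging the two summations in
`∑_k c (n+1) k H (d+1) k` therefore pulls out one factor `1 / [n+1]` and leaves
`∑_j c (n+1) j H d j`, so induction on `d` reduces the identity to `∑_k c (n+1) k = 1`, again a
telescoping sum.
-/

open Finset

lemma qint_add (q : ℂ) (a b : ℕ) : qint q (a + b) = qint q a + q ^ a * qint q b := by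
  simp [qint, sum_range_add, mul_sum, pow_add]

lemma qfact_succ (q : ℂ) (n : ℕ) : qfact q (n + 1) = qint q (n + 1) * qfact q n := rfl

lemma qbinom_of_lt (q : ℂ) {n k : ℕ} (h : n < k) : qbinom q n k = 0 := by
  simp [qbinom, Nat.not_le.mpr h]

noncomputable def bradleyCoeff (q : ℂ) (n k : ℕ) : ℂ :=
  (-1) ^ (k + 1) * q ^ k.choose 2 * qbinom q n k

section NonzeroQInt

variable {q : ℂ} (hq : ∀ m : ℕ, 1 ≤ m → qint q m ≠ 0)
include hq

lemma qfact_ne_zero (n : ℕ) : qfact q n ≠ 0 := by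
  induction n with
  | zero => simp [qfact]
  | succ n ih => exact mul_ne_zero (hq _ n.succ_pos) ih

lemma qbinom_zero_right (n : ℕ) : qbinom q n 0 = 1 := by
  simp [qbinom, qfact, qfact_ne_zero hq n]

lemma qbinom_self (n : ℕ) : qbinom q n n = 1 := by
  simp [qbinom, qfact, qfact_ne_zero hq n]

lemma qbinom_succ_succ (n k : ℕ) :
    qbinom q (n + 1) (k + 1) = qbinom q n k + q ^ (k + 1) * qbinom q n (k + 1) := by
  rcases lt_trichotomy k n with h | rfl | h
  · obtain ⟨m, rfl⟩ : ∃ m, n = k + (m + 1) := ⟨n - k - 1, by omega⟩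
    have hsum : qint q (k + (m + 1) + 1) = qint q (k + 1) + q ^ (k + 1) * qint q (m + 1) := by
      rw [← qint_add]; ring_nf
    simp only [qbinom, if_pos (by omega : k + 1 ≤ k + (m + 1) + 1),
      if_pos (by omega : k ≤ k + (m + 1)), if_pos (by omega : k + 1 ≤ k + (m + 1)),
      show k + (m + 1) + 1 - (k + 1) = m + 1 by omega, show k + (m + 1) - k = m + 1 by omega,
      show k + (m + 1) - (k + 1) = m by omega, qfact_succ, hsum]
    have := qfact_ne_zero hq k
    have := qfact_ne_zero hq m
    have := hq (k + 1) k.succ_pos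
    have := hq (m + 1) m.succ_pos
    field_simp
  · rw [qbinom_of_lt q k.lt_succ_self, qbinom_self hq, qbinom_self hq]
    ring
  · rw [qbinom_of_lt q h, qbinom_of_lt q (by omega : n < k + 1),
      qbinom_of_lt q (by omega : n + 1 < k + 1)]
    ring

lemma qint_mul_qbinom_succ {n k : ℕ} (h : k ≤ n) :
    qint q (k + 1) * qbinom q (n + 1) (k + 1) = qint q (n + 1) * qbinom q n k := by
  simp only [qbinom, if_pos (Nat.succ_le_succ h), if_pos h, Nat.add_sub_add_right, qfact_succ]
  have := qfact_ne_zero hq k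
  have := qfact_ne_zero hq (n - k)
  have := hq (k + 1) k.succ_pos
  field_simp

lemma sum_range_bradleyCoeff (n m : ℕ) :
    ∑ k ∈ range (m + 1), bradleyCoeff q (n + 1) k
      = (-1) ^ (m + 1) * q ^ (m + 1).choose 2 * qbinom q n m := by
  induction m with
  | zero => simp [bradleyCoeff, qbinom_zero_right hq]
  | succ m ih =>
    have hchoose : (m + 2).choose 2 = (m + 1).choose 2 + (m + 1) := by
      simp [Nat.choose_succ_succ', add_comm]
    rw [sum_range_succ, ih, bradleyCoeff, qbinom_succ_succ hq, hchoose, pow_add]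
    ring

lemma sum_Icc_bradleyCoeff {n m : ℕ} (h : m ≤ n + 1) :
    ∑ k ∈ Icc (m + 1) (n + 1), bradleyCoeff q (n + 1) k
      = (-1) ^ m * q ^ (m + 1).choose 2 * qbinom q n m := by
  rw [← Ico_add_one_right_eq_Icc, sum_Ico_eq_sub _ (by omega), sum_range_bradleyCoeff hq,
    sum_range_bradleyCoeff hq, qbinom_of_lt q n.lt_succ_self]
  ring

lemma inv_qint_mul_sum_Icc_bradleyCoeff {n j : ℕ} (hj : 1 ≤ j) (hjn : j ≤ n + 1) :
    (qint q j)⁻¹ * ∑ k ∈ Icc j (n + 1), bradleyCoeff q (n + 1) k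
      = (qint q (n + 1))⁻¹ * bradleyCoeff q (n + 1) j := by
  obtain ⟨m, rfl⟩ : ∃ m, j = m + 1 := ⟨j - 1, by omega⟩
  have habsorb := qint_mul_qbinom_succ hq (by omega : m ≤ n)
  have := hq (m + 1) m.succ_pos
  have := hq (n + 1) n.succ_pos
  rw [sum_Icc_bradleyCoeff hq (by omega), bradleyCoeff]
  field_simp
  linear_combination -(-1) ^ m * q ^ (m + 1).choose 2 * habsorb

lemma sum_Icc_one_bradleyCoeff (n : ℕ) : ∑ k ∈ Icc 1 (n + 1), bradleyCoeff q (n + 1) k = 1 := by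
  simpa [qbinom_zero_right hq] using sum_Icc_bradleyCoeff hq (n.zero_le.trans n.le_succ)

end NonzeroQInt

lemma chainsIcc_zero (lo hi : ℕ) : chainsIcc 0 lo hi = univ := by
  ext f
  simp [chainsIcc]

lemma mem_chainsIcc_succ {d lo hi : ℕ} {f : Fin (d + 1) → ℕ} :
    f ∈ chainsIcc (d + 1) lo hi ↔ f 0 ∈ Icc lo hi ∧ Fin.tail f ∈ chainsIcc d lo (f 0) := by
  simp only [chainsIcc, mem_filter, Fintype.mem_piFinset, mem_Icc, Fin.forall_fin_succ, Fin.tail,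
    Fin.succ_le_succ_iff, Fin.le_zero_iff, Fin.succ_ne_zero, Fin.zero_le, le_refl, forall_true_left,
    IsEmpty.forall_iff, true_and]
  grind

lemma sum_chainsIcc_succ {M : Type*} [AddCommMonoid M] (d lo hi : ℕ) (F : (Fin (d + 1) → ℕ) → M) :
    ∑ f ∈ chainsIcc (d + 1) lo hi, F f
      = ∑ a ∈ Icc lo hi, ∑ g ∈ chainsIcc d lo a, F (Fin.cons a g) := by
  rw [sum_sigma']
  refine sum_nbij' (fun f => ⟨f 0, Fin.tail f⟩) (fun x => Fin.cons x.1 x.2) ?_ ?_ ?_ ?_ ?_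
  · intro f hf
    exact mem_sigma.mpr (mem_chainsIcc_succ.mp hf)
  · rintro ⟨a, g⟩ hx
    rw [mem_sigma] at hx
    simpa [mem_chainsIcc_succ] using hx
  · intro f _
    exact Fin.cons_self_tail f
  · rintro ⟨a, g⟩ _
    simp
  · intro f _
    simp

noncomputable def qHarmonicStar (q : ℂ) (d k : ℕ) : ℂ :=
  ∑ f ∈ chainsIcc d 1 k, (∏ i, qint q (f i))⁻¹

lemma qHarmonicStar_zero (q : ℂ) (k : ℕ) : qHarmonicStar q 0 k = 1 := by
  simp [qHarmonicStar, chainsIcc_zero]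

lemma qHarmonicStar_succ (q : ℂ) (d k : ℕ) :
    qHarmonicStar q (d + 1) k = ∑ j ∈ Icc 1 k, (qint q j)⁻¹ * qHarmonicStar q d j := by
  simp only [qHarmonicStar, sum_chainsIcc_succ, mul_sum, Fin.prod_univ_succ, Fin.cons_zero,
    Fin.cons_succ, mul_inv]

lemma sum_bradleyCoeff_mul_qHarmonicStar {q : ℂ} (hq : ∀ m : ℕ, 1 ≤ m → qint q m ≠ 0) (n d : ℕ) :
    ∑ k ∈ Icc 1 (n + 1), bradleyCoeff q (n + 1) k * qHarmonicStar q d k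
      = ((qint q (n + 1)) ^ d)⁻¹ := by
  induction d with
  | zero => simp [qHarmonicStar_zero, sum_Icc_one_bradleyCoeff hq]
  | succ d ih =>
    calc ∑ k ∈ Icc 1 (n + 1), bradleyCoeff q (n + 1) k * qHarmonicStar q (d + 1) k
        = ∑ j ∈ Icc 1 (n + 1), qHarmonicStar q d j *
            ((qint q j)⁻¹ * ∑ k ∈ Icc j (n + 1), bradleyCoeff q (n + 1) k) := by
          simp only [qHarmonicStar_succ, mul_sum]
          rw [sum_comm' (t' := Icc 1 (n + 1)) (s' := fun j => Icc j (n + 1))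
            (by intro k j; simp only [mem_Icc]; omega)]
          refine sum_congr rfl fun j _ => sum_congr rfl fun k _ => by ring
      _ = (qint q (n + 1))⁻¹ *
            ∑ j ∈ Icc 1 (n + 1), bradleyCoeff q (n + 1) j * qHarmonicStar q d j := by
          rw [mul_sum]
          refine sum_congr rfl fun j hj => ?_
          rw [mem_Icc] at hj
          rw [inv_qint_mul_sum_Icc_bradleyCoeff hq hj.1 hj.2]
          ring
      _ = ((qint q (n + 1)) ^ (d + 1))⁻¹ := by
          rw [ih, pow_succ, mul_inv, mul_comm]

theorem bradley_identity_general (q : ℂ) (hm : ∀ m : ℕ, 1 ≤ m → qint q m ≠ 0)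
    (n d : ℕ) (hn : 1 ≤ n) :
    ∑ k ∈ Finset.Icc 1 n, (-1 : ℂ) ^ (k + 1) * q ^ k.choose 2 * qbinom q n k *
        ∑ f ∈ chainsIcc d 1 k, (∏ i, qint q (f i))⁻¹
      = ((qint q n) ^ d)⁻¹ := by
  obtain ⟨n, rfl⟩ : ∃ m, n = m + 1 := ⟨n - 1, by omega⟩
  exact sum_bradleyCoeff_mul_qHarmonicStar hm n d

theorem bradley_identity (q : ℂ) (hm : ∀ m : ℕ, 1 ≤ m → qint q m ≠ 0)
    (n d : ℕ) (hn : 1 ≤ n) (hd : 1 ≤ d) :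
    ∑ k ∈ Finset.Icc 1 n, (-1 : ℂ) ^ (k + 1) * q ^ k.choose 2 * qbinom q n k *
        ∑ f ∈ chainsIcc d 1 k, (∏ i, qint q (f i))⁻¹
      = ((qint q n) ^ d)⁻¹ :=
  bradley_identity_general q hm n d hn
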